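/- Fix a real t ∈ (0,1) ∪ (1,∞). Let S_N(k) denote the closed-form second-order CUE spectral form factor of Proposition 1. Then lim_{N→∞} S_N(tN)/N = min(1, t). -/

import Mathlib

/-!
At `k = tN` the `min` term of `SFF` is `N · min 1 t + O(1)`, and the rest is `o(N)`: the
oscillating prefactor is bounded, `ψ₀(x) = log x + O(1)`, and `x ψ₁(x)` stays bounded.
Both estimates come from convexity alone. `log Γ` is convex (Bohr–Mollerup), and `ψ₀` is
concave as the pointwise limit of the concave functions `log (x + n) - ∑_{k<n} (x + k)⁻¹`;
so the derivatives are squeezed between slopes of unit secants, which the functional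
equations `log Γ(x+1) = log Γ(x) + log x` and `ψ₀(x+1) = ψ₀(x) + 1/x` compute.
-/

open Real Filter Finset

/-- The `k`-th polygamma function: the `(k+1)`-st derivative of `log ∘ Γ`.
(Since `Real.log` of a negative number is the log of its absolute value, this
agrees with the analytic continuation of the polygamma functions.) -/
noncomputable def polygamma (k : ℕ) (x : ℝ) : ℝ :=
  iteratedDeriv (k + 1) (fun y => Real.log (Real.Gamma y)) x

/-- The digamma function `ψ₀`. -/
noncomputable def digamma (x : ℝ) : ℝ := polygamma 0 x

/-- The trigamma function `ψ₁`. -/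
noncomputable def trigamma (x : ℝ) : ℝ := polygamma 1 x

/-- The closed-form second-order CUE spectral form factor of Proposition 1. -/
noncomputable def SFF (N : ℕ) (k : ℝ) : ℝ :=
  min (N : ℝ) (|k| - Real.sin (2 * π * |k|) / (2 * π)) +
    Real.sin (π * |k|) ^ 2 / π ^ 2 *
      (digamma ((N : ℝ) + |k|) + ((N : ℝ) + |k|) * trigamma ((N : ℝ) + |k|) +
        digamma ((abs ((N : ℝ) - |k|)) + 1) + (abs ((N : ℝ) - |k|)) * trigamma ((abs ((N : ℝ) - |k|)) + 1) -
        2 * |k| * trigamma (|k| + 1) - 2 * digamma (|k| + 1))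

open Set Asymptotics Topology

lemma digamma_eq_deriv : digamma = deriv (log ∘ Gamma) := by
  funext x; simp only [digamma, polygamma, zero_add, iteratedDeriv_one]; rfl

lemma trigamma_eq_deriv : trigamma = deriv digamma := by
  funext x; rw [trigamma, polygamma, iteratedDeriv_succ, iteratedDeriv_one, digamma_eq_deriv]; rfl

lemma ConcaveOn.of_tendsto {ι E : Type*} [AddCommGroup E] [Module ℝ E] {l : Filter ι} [l.NeBot]
    {s : Set E} {f : ι → E → ℝ} {g : E → ℝ} (hf : ∀ᶠ i in l, ConcaveOn ℝ s (f i))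
    (hg : ∀ x ∈ s, Tendsto (fun i => f i x) l (𝓝 (g x))) :
    ConcaveOn ℝ s g := by
  have hs : Convex ℝ s := hf.exists.choose_spec.1
  refine ⟨hs, fun x hx y hy a b ha hb hab => ?_⟩
  refine le_of_tendsto_of_tendsto (((hg x hx).const_smul a).add ((hg y hy).const_smul b))
    (hg _ (hs hx hy ha hb hab)) ?_
  filter_upwards [hf] with i hi using hi.2 hx hy ha hb hab

lemma ConvexOn.finset_sum {ι 𝕜 E β : Type*} [Semiring 𝕜] [PartialOrder 𝕜]
    [AddCommMonoid E] [AddCommMonoid β] [PartialOrder β] [IsOrderedAddMonoid β] [SMul 𝕜 E]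
    [Module 𝕜 β]
    {s : Set E} {t : Finset ι} {f : ι → E → β} (hs : Convex 𝕜 s)
    (hf : ∀ i ∈ t, ConvexOn 𝕜 s (f i)) :
    ConvexOn 𝕜 s (fun x => ∑ i ∈ t, f i x) := by
  classical
  induction t using Finset.induction_on with
  | empty => simpa using convexOn_const 0 hs
  | insert i t hi ih =>
    simp only [Finset.sum_insert hi]
    exact (hf i (Finset.mem_insert_self i t)).add
      (ih fun j hj => hf j (Finset.mem_insert_of_mem hj))

lemma differentiableAt_log_Gamma {x : ℝ} (hx : 0 < x) :
    DifferentiableAt ℝ (log ∘ Gamma) x := by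
  have hx' : ∀ m : ℕ, x ≠ -m := fun m => by linarith [(m.cast_nonneg : (0 : ℝ) ≤ m)]
  exact (differentiableAt_Gamma hx').log (Gamma_ne_zero hx')

lemma log_Gamma_add_one {x : ℝ} (hx : 0 < x) :
    (log ∘ Gamma) (x + 1) = (log ∘ Gamma) x + log x := by
  simp only [Function.comp, Gamma_add_one hx.ne', log_mul hx.ne' (Gamma_pos_of_pos hx).ne',
    add_comm]

lemma digamma_add_one {x : ℝ} (hx : 0 < x) : digamma (x + 1) = digamma x + x⁻¹ := by
  rw [digamma_eq_deriv, ← deriv_comp_add_const, ← Real.deriv_log,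
    ← deriv_add (differentiableAt_log_Gamma hx) (differentiableAt_log hx.ne')]
  refine Filter.EventuallyEq.deriv_eq ?_
  filter_upwards [eventually_gt_nhds hx] with y hy using log_Gamma_add_one hy

lemma digamma_le_log {x : ℝ} (hx : 0 < x) : digamma x ≤ log x := by
  have h := convexOn_log_Gamma.deriv_le_slope (mem_Ioi.mpr hx) (mem_Ioi.mpr (by linarith))
    (lt_add_one x) (differentiableAt_log_Gamma hx)
  rwa [slope_def_field, log_Gamma_add_one hx, add_sub_cancel_left, add_sub_cancel_left, div_one,
    ← digamma_eq_deriv] at h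

lemma log_le_digamma_add_one {x : ℝ} (hx : 0 < x) : log x ≤ digamma (x + 1) := by
  have h := convexOn_log_Gamma.slope_le_deriv (mem_Ioi.mpr hx) (mem_Ioi.mpr (by linarith))
    (lt_add_one x) (differentiableAt_log_Gamma (by linarith))
  rwa [slope_def_field, log_Gamma_add_one hx, add_sub_cancel_left, add_sub_cancel_left, div_one,
    ← digamma_eq_deriv] at h

lemma abs_digamma_le {x : ℝ} (hx : 1 ≤ x) : |digamma x| ≤ 1 + log x := by
  have hx0 : 0 < x := by linarith
  have hlow : log x - x⁻¹ ≤ digamma x := by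
    linarith [log_le_digamma_add_one hx0, digamma_add_one hx0]
  have hinv : x⁻¹ ≤ 1 := inv_le_one_of_one_le₀ hx
  have hlog : 0 ≤ log x := log_nonneg hx
  rw [abs_le]
  constructor <;> linarith [digamma_le_log hx0]

lemma digamma_add_nat {x : ℝ} (hx : 0 < x) (n : ℕ) :
    digamma (x + n) = digamma x + ∑ k ∈ Finset.range n, (x + k)⁻¹ := by
  induction n with
  | zero => simp
  | succ n ih =>
    rw [Nat.cast_succ, ← add_assoc, digamma_add_one (by positivity), ih, Finset.sum_range_succ,
      add_assoc]

lemma tendsto_log_sub_sum_inv {x : ℝ} (hx : 0 < x) :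
    Tendsto (fun n : ℕ => log (x + n) - ∑ k ∈ Finset.range n, (x + k)⁻¹) atTop
      (𝓝 (digamma x)) := by
  have hgap : Tendsto (fun n : ℕ => log (x + n) - digamma (x + n)) atTop (𝓝 0) := by
    have hinv : Tendsto (fun n : ℕ => (x + n)⁻¹) atTop (𝓝 0) :=
      (tendsto_atTop_add_const_left _ x tendsto_natCast_atTop_atTop).inv_tendsto_atTop
    refine tendsto_of_tendsto_of_tendsto_of_le_of_le tendsto_const_nhds hinv (fun n => ?_)
      (fun n => ?_)
    · simp only [sub_nonneg]; exact digamma_le_log (by positivity)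
    · have hxn : 0 < x + n := by positivity
      linarith [log_le_digamma_add_one hxn, digamma_add_one hxn]
  have := hgap.const_add (digamma x)
  rw [add_zero] at this
  refine this.congr fun n => ?_
  rw [digamma_add_nat hx]
  ring

lemma concaveOn_digamma : ConcaveOn ℝ (Ioi 0) digamma := by
  refine ConcaveOn.of_tendsto (Eventually.of_forall fun n => ?_)
    fun x hx => tendsto_log_sub_sum_inv hx
  refine ConcaveOn.sub ?_ (ConvexOn.finset_sum (convex_Ioi 0) fun k _ => ?_)
  · refine (strictConcaveOn_log_Ioi.concaveOn.translate_left (n : ℝ)).subset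
      (fun y (hy : 0 < y) => show 0 < (n : ℝ) + y by positivity) (convex_Ioi 0)
  · have h := (convexOn_zpow (𝕜 := ℝ) (-1)).translate_left (k : ℝ)
    simp only [zpow_neg_one] at h
    exact h.subset (fun y (hy : 0 < y) => show 0 < (k : ℝ) + y by positivity) (convex_Ioi 0)

/- `digamma` is in fact smooth on `(0, ∞)`, but concavity alone bounds its derivative wherever
it exists, and `deriv` is `0` elsewhere. -/
lemma trigamma_add_one_le {x : ℝ} (hx : 0 < x) : trigamma (x + 1) ≤ x⁻¹ := by
  rw [trigamma_eq_deriv]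
  by_cases hd : DifferentiableAt ℝ digamma (x + 1)
  · have h := concaveOn_digamma.deriv_le_slope (mem_Ioi.mpr hx) (mem_Ioi.mpr (by linarith))
      (lt_add_one x) hd
    rwa [slope_def_field, digamma_add_one hx, add_sub_cancel_left, add_sub_cancel_left,
      div_one] at h
  · rw [deriv_zero_of_not_differentiableAt hd]
    positivity

lemma trigamma_nonneg {x : ℝ} (hx : 0 < x) : 0 ≤ trigamma x := by
  rw [trigamma_eq_deriv]
  by_cases hd : DifferentiableAt ℝ digamma x
  · have h := concaveOn_digamma.slope_le_deriv (mem_Ioi.mpr hx) (mem_Ioi.mpr (by linarith))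
      (lt_add_one x) hd
    rw [slope_def_field, digamma_add_one hx, add_sub_cancel_left, add_sub_cancel_left,
      div_one] at h
    exact (inv_pos.mpr hx).le.trans h
  · rw [deriv_zero_of_not_differentiableAt hd]

lemma abs_mul_trigamma_add_one_le {x : ℝ} (hx : 0 ≤ x) : |x * trigamma (x + 1)| ≤ 1 := by
  rcases hx.eq_or_lt with rfl | hx
  · simp
  rw [abs_of_nonneg (mul_nonneg hx.le (trigamma_nonneg (by linarith)))]
  calc x * trigamma (x + 1) ≤ x * x⁻¹ := by gcongr; exact trigamma_add_one_le hx
    _ = 1 := mul_inv_cancel₀ hx.ne'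

lemma abs_mul_trigamma_le {x : ℝ} (hx : 2 ≤ x) : |x * trigamma x| ≤ 2 := by
  have hle := trigamma_add_one_le (x := x - 1) (by linarith)
  rw [sub_add_cancel] at hle
  rw [abs_of_nonneg (mul_nonneg (by linarith) (trigamma_nonneg (by linarith)))]
  calc x * trigamma x ≤ x * (x - 1)⁻¹ := by gcongr
    _ ≤ 2 := by rw [← div_eq_mul_inv, div_le_iff₀ (by linarith)]; linarith

lemma isLittleO_natCast_of_abs_le {u : ℕ → ℝ} {C : ℝ} (h : ∀ᶠ N in atTop, |u N| ≤ C) :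
    u =o[atTop] (fun N : ℕ => (N : ℝ)) :=
  (IsBigO.of_bound C (g := fun _ => (1 : ℝ)) (by simpa using h)).trans_isLittleO
    ((isLittleO_one_left_iff ℝ).mpr (by simpa using tendsto_natCast_atTop_atTop))

lemma isLittleO_log_const_mul_natCast {C : ℝ} (hC : 0 < C) :
    (fun N : ℕ => log (C * N)) =o[atTop] (fun N : ℕ => (N : ℝ)) :=
  (isLittleO_log_id_atTop.comp_tendsto
    (tendsto_natCast_atTop_atTop.const_mul_atTop hC)).trans_isBigO (isBigO_const_mul_self C _ _)

lemma isLittleO_digamma_comp {x : ℕ → ℝ} {C : ℝ}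
    (h : ∀ᶠ N in atTop, 1 ≤ x N ∧ x N ≤ C * N) :
    (fun N => digamma (x N)) =o[atTop] (fun N : ℕ => (N : ℝ)) := by
  obtain ⟨N₀, h₁, h₂⟩ := h.exists
  have hC : 0 < C := by
    by_contra! hC
    nlinarith [N₀.cast_nonneg (α := ℝ)]
  have hbound : (fun N => digamma (x N)) =O[atTop] (fun N : ℕ => 1 + log (C * N)) := by
    refine IsBigO.of_bound 1 ?_
    filter_upwards [h] with N ⟨h₁, h₂⟩
    have hlog : log (x N) ≤ log (C * N) := log_le_log (by linarith) h₂
    rw [Real.norm_eq_abs, Real.norm_eq_abs, one_mul,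
      abs_of_nonneg (by linarith [log_nonneg h₁] : (0 : ℝ) ≤ 1 + log (C * N))]
    linarith [abs_digamma_le h₁]
  exact hbound.trans_isLittleO ((isLittleO_natCast_of_abs_le (C := 1) (by simp)).add
    (isLittleO_log_const_mul_natCast hC))

noncomputable def sffBracket (N : ℕ) (κ : ℝ) : ℝ :=
  digamma (N + κ) + (N + κ) * trigamma (N + κ) + digamma (|N - κ| + 1) +
    |N - κ| * trigamma (|N - κ| + 1) - 2 * κ * trigamma (κ + 1) - 2 * digamma (κ + 1)

lemma SFF_eq (N : ℕ) (k : ℝ) :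
    SFF N k = min (N : ℝ) (|k| - sin (2 * π * |k|) / (2 * π)) +
      sin (π * |k|) ^ 2 / π ^ 2 * sffBracket N |k| :=
  rfl

lemma isLittleO_sffBracket {t : ℝ} (ht : 0 ≤ t) :
    (fun N : ℕ => sffBracket N (t * N)) =o[atTop] (fun N : ℕ => (N : ℝ)) := by
  have hN : ∀ᶠ N : ℕ in atTop, (2 : ℝ) ≤ N := by
    filter_upwards [eventually_ge_atTop 2] with N hN
    exact_mod_cast hN
  have h₁ : (fun N : ℕ => digamma (N + t * N)) =o[atTop] (fun N : ℕ => (N : ℝ)) :=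
    isLittleO_digamma_comp (C := 1 + t) <| by
      filter_upwards [hN] with N hN
      constructor <;> nlinarith
  have h₂ : (fun N : ℕ => (N + t * N) * trigamma (N + t * N)) =o[atTop]
      (fun N : ℕ => (N : ℝ)) :=
    isLittleO_natCast_of_abs_le (C := 2) <| by
      filter_upwards [hN] with N hN
      exact abs_mul_trigamma_le (by nlinarith)
  have h₃ : (fun N : ℕ => digamma (|N - t * N| + 1)) =o[atTop] (fun N : ℕ => (N : ℝ)) :=
    isLittleO_digamma_comp (C := 2 + t) <| by
      filter_upwards [hN] with N hN
      have : |(N : ℝ) - t * N| ≤ N + t * N :=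
        abs_sub_le_iff.mpr ⟨by nlinarith, by nlinarith⟩
      constructor <;> nlinarith [abs_nonneg ((N : ℝ) - t * N)]
  have h₄ : (fun N : ℕ => |N - t * N| * trigamma (|N - t * N| + 1)) =o[atTop]
      (fun N : ℕ => (N : ℝ)) :=
    isLittleO_natCast_of_abs_le (C := 1) <|
      Eventually.of_forall fun N => abs_mul_trigamma_add_one_le (abs_nonneg _)
  have h₅ : (fun N : ℕ => t * N * trigamma (t * N + 1)) =o[atTop] (fun N : ℕ => (N : ℝ)) :=
    isLittleO_natCast_of_abs_le (C := 1) <|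
      Eventually.of_forall fun N => abs_mul_trigamma_add_one_le (by positivity)
  have h₆ : (fun N : ℕ => digamma (t * N + 1)) =o[atTop] (fun N : ℕ => (N : ℝ)) :=
    isLittleO_digamma_comp (C := t + 1) <| by
      filter_upwards [hN] with N hN
      constructor <;> nlinarith
  simpa only [sffBracket, mul_assoc] using
    ((((h₁.add h₂).add h₃).add h₄).sub (h₅.const_mul_left 2)).sub (h₆.const_mul_left 2)

theorem sff_large_N_limit_general (t : ℝ) (ht : 0 < t) :
    Filter.Tendsto (fun N : ℕ => SFF N (t * N) / N) Filter.atTop (nhds (min 1 t)) := by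
  have hsmooth :
      Tendsto (fun N : ℕ => t - sin (2 * π * (t * N)) / (2 * π) / N) atTop (𝓝 t) := by
    have hbdd : ∀ N : ℕ, |sin (2 * π * (t * N)) / (2 * π)| ≤ 1 := fun N => by
      rw [abs_div, abs_of_pos two_pi_pos, div_le_one two_pi_pos]
      linarith [abs_sin_le_one (2 * π * (t * N)), pi_gt_three]
    simpa using tendsto_const_nhds.sub
      (isLittleO_natCast_of_abs_le (Eventually.of_forall hbdd)).tendsto_div_nhds_zero
  have hosc : Tendsto (fun N : ℕ => sin (π * (t * N)) ^ 2 / π ^ 2 * sffBracket N (t * N) / N)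
      atTop (𝓝 0) := by
    have hbdd :
        (fun N : ℕ => sin (π * (t * N)) ^ 2 / π ^ 2) =O[atTop] (fun _ => (1 : ℝ)) := by
      refine IsBigO.of_bound 1 (Eventually.of_forall fun N => ?_)
      rw [Real.norm_eq_abs, norm_one, one_mul, abs_div, abs_of_nonneg (sq_nonneg _),
        abs_of_pos (by positivity), div_le_one (by positivity)]
      nlinarith [sin_sq_le_one (π * (t * N)), pi_gt_three]
    simpa using (hbdd.mul_isLittleO (isLittleO_sffBracket ht.le)).tendsto_div_nhds_zero
  have hlim := ((tendsto_const_nhds (x := (1 : ℝ))).min hsmooth).add hosc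
  rw [add_zero] at hlim
  refine hlim.congr' ?_
  filter_upwards [eventually_ne_atTop 0] with N hN
  have hN' : (0 : ℝ) < N := by positivity
  rw [SFF_eq, abs_of_nonneg (by positivity), add_div, ← min_div_div_right hN'.le,
    div_self hN'.ne', sub_div, mul_div_cancel_right₀ _ hN'.ne']

/-- Large-`N` limit of the rescaled second-order SFF at `k = tN`. -/
theorem sff_large_N_limit (t : ℝ) (ht : 0 < t) (ht1 : t ≠ 1) :
    Filter.Tendsto (fun N : ℕ => SFF N (t * N) / N) Filter.atTop (nhds (min 1 t)) :=
  sff_large_N_limit_general t ht
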